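/- arXiv:1702.06616 — 4 statements merged into one kernel-verified Lean document; each statement's English description precedes it below -/
import Mathlib

section
/- Let n ≥ 1 and let a₁,…,aₙ be integers, and set A = max{|a₁|,…,|aₙ|}. Then there exist integers x₁,…,xₙ such that x₁·a₁ + ⋯ + xₙ·aₙ = gcd(a₁,…,aₙ) and |xᵢ| ≤ (n+1)·A² for every i = 1,…,n. -/
private theorem bezout_fin : ∀ (n : ℕ) (a : Fin n → ℤ), ∃ x : Fin n → ℤ,
    ∑ i, x i * a i = Finset.univ.gcd a := by
  intro n
  induction n with
  | zero => intro a; exact ⟨0, by simp⟩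
  | succ n ih =>
    intro a
    obtain ⟨x, hx⟩ := ih (a ∘ Fin.succ)
    set g : ℤ := Finset.univ.gcd (a ∘ Fin.succ) with hg
    have hgcd : Finset.univ.gcd a = GCDMonoid.gcd (a 0) g := by
      rw [Fin.univ_succ, Finset.cons_eq_insert, Finset.gcd_insert, Finset.map_eq_image,
        Finset.gcd_image]
      rfl
    have huv : Int.gcdA (a 0) g * a 0 + Int.gcdB (a 0) g * g = GCDMonoid.gcd (a 0) g := by
      have := Int.gcd_eq_gcd_ab (a 0) g
      rw [← Int.coe_gcd, this]; ring
    refine ⟨Fin.cons (Int.gcdA (a 0) g) (fun i => Int.gcdB (a 0) g * x i), ?_⟩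
    rw [Fin.sum_univ_succ, hgcd, ← huv]
    simp only [Fin.cons_zero, Fin.cons_succ]
    rw [← hx, Finset.mul_sum]
    congr 1
    exact Finset.sum_congr rfl (fun i _ => by simp [mul_assoc])

/-- **Unary extended gcd (Theorem 5.1, core):** for integers `a 1, …, a n` with
`n ≥ 1` and `A = max |a i|`, there are integers `x i` with
`∑ x i * a i = gcd (a 1, …, a n)` and `|x i| ≤ (n+1) * A ^ 2`. -/
theorem extended_gcd_with_bound (n : ℕ) (hn : 1 ≤ n) (a : Fin n → ℤ)
    (A : ℤ) (hA : A = Finset.univ.sup' ⟨⟨0, hn⟩, Finset.mem_univ _⟩ (fun i => |a i|)) :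
    ∃ x : Fin n → ℤ,
      ∑ i, x i * a i = Finset.univ.gcd a ∧
      ∀ i, |x i| ≤ ((n : ℤ) + 1) * A ^ 2 := by
  have hAle : ∀ i, |a i| ≤ A := by
    intro i
    rw [hA]
    exact Finset.le_sup' (fun i => |a i|) (Finset.mem_univ i)
  have hA0 : 0 ≤ A := le_trans (abs_nonneg _) (hAle ⟨0, hn⟩)
  by_cases hall : ∀ i, a i = 0
  · refine ⟨0, ?_, ?_⟩
    · rw [Finset.gcd_eq_zero_iff.2 (fun i _ => hall i)]
      simp
    · intro i
      simp only [Pi.zero_apply, abs_zero]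
      positivity
  · -- some a i ≠ 0
    push_neg at hall
    obtain ⟨i₀, hi₀⟩ := hall
    have hApos : 0 < A := lt_of_lt_of_le (abs_pos.2 hi₀) (hAle i₀)
    have hA1 : 1 ≤ A := hApos
    -- pick j attaining the sup
    obtain ⟨j, -, hj⟩ := Finset.exists_mem_eq_sup' ⟨⟨0, hn⟩, Finset.mem_univ _⟩
      (fun i => |a i|)
    have hAj : |a j| = A := by rw [hA, hj]
    have haj : a j ≠ 0 := by
      intro h
      rw [h, abs_zero] at hAj
      exact absurd hAj.symm (ne_of_gt hApos)
    have hs : (a j).sign * a j = A := by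
      rcases haj.lt_or_gt with h | h
      · rw [Int.sign_eq_neg_one_of_neg h, ← hAj, abs_of_neg h]; ring
      · rw [Int.sign_eq_one_of_pos h, ← hAj, abs_of_pos h]; ring
    obtain ⟨x, hx⟩ := bezout_fin n a
    set g : ℤ := Finset.univ.gcd a with hg
    set y : Fin n → ℤ := fun i =>
      if i = j then x j + ∑ i' ∈ Finset.univ.erase j, (x i' / A) * (a j).sign * a i'
      else x i % A with hy
    have hyj : y j = x j + ∑ i' ∈ Finset.univ.erase j, (x i' / A) * (a j).sign * a i' :=
      if_pos rfl
    have hyi : ∀ i, i ≠ j → y i = x i % A := fun i h => if_neg h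
    have key : ∑ i, y i * a i = g := by
      rw [← hx, ← Finset.add_sum_erase _ (fun i => y i * a i) (Finset.mem_univ j),
          ← Finset.add_sum_erase _ (fun i => x i * a i) (Finset.mem_univ j)]
      have h1 : ∀ i ∈ Finset.univ.erase j,
          y i * a i = x i * a i - (x i / A) * A * a i := by
        intro i hi
        rw [hyi i (Finset.ne_of_mem_erase hi), Int.emod_def]
        ring
      rw [Finset.sum_congr rfl h1, Finset.sum_sub_distrib, hyj, add_mul, Finset.sum_mul]
      have h2 : ∀ i ∈ Finset.univ.erase j,
          (x i / A) * (a j).sign * a i * a j = (x i / A) * A * a i := by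
        intro i _
        calc (x i / A) * (a j).sign * a i * a j
            = (x i / A) * a i * ((a j).sign * a j) := by ring
          _ = (x i / A) * A * a i := by rw [hs]; ring
      rw [Finset.sum_congr rfl h2]
      ring
    refine ⟨y, key, ?_⟩
    have hbnd_ne : ∀ i, i ≠ j → |y i| ≤ A := by
      intro i h
      rw [hyi i h, abs_of_nonneg (Int.emod_nonneg _ (ne_of_gt hApos))]
      exact le_of_lt (Int.emod_lt_of_pos _ hApos)
    -- bound for j
    have hsum_j : y j * a j = g - ∑ i ∈ Finset.univ.erase j, y i * a i := by
      have := Finset.add_sum_erase _ (fun i => y i * a i) (Finset.mem_univ j)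
      rw [← key, ← this]
      ring
    have hgA : |g| ≤ A := by
      rw [← hAj]
      exact Int.le_of_dvd (abs_pos.2 haj)
        ((abs_dvd _ _).mpr ((dvd_abs _ _).mpr (Finset.gcd_dvd (Finset.mem_univ j))))
    have hcard : ((Finset.univ.erase j).card : ℤ) = (n : ℤ) - 1 := by
      rw [Finset.card_erase_of_mem (Finset.mem_univ j), Finset.card_univ, Fintype.card_fin]
      have : (1:ℕ) ≤ n := hn
      push_cast [this]
      ring
    have hsum_bnd : ∑ i ∈ Finset.univ.erase j, |y i * a i| ≤ ((n : ℤ) - 1) * (A * A) := by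
      rw [← hcard]
      refine le_trans (Finset.sum_le_card_nsmul _ _ (A * A) ?_) ?_
      · intro i hi
        rw [abs_mul]
        exact mul_le_mul (hbnd_ne i (Finset.ne_of_mem_erase hi)) (hAle i)
          (abs_nonneg _) hA0
      · rw [nsmul_eq_mul]
    have hyjA : |y j| * A ≤ A + ((n : ℤ) - 1) * (A * A) := by
      have e1 : |y j| * A = |y j * a j| := by rw [abs_mul, hAj]
      rw [e1, hsum_j]
      calc |g - ∑ i ∈ Finset.univ.erase j, y i * a i|
          ≤ |g| + |∑ i ∈ Finset.univ.erase j, y i * a i| := abs_sub _ _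
        _ ≤ |g| + ∑ i ∈ Finset.univ.erase j, |y i * a i| := by
            gcongr
            exact Finset.abs_sum_le_sum_abs _ _
        _ ≤ A + ((n : ℤ) - 1) * (A * A) := add_le_add hgA hsum_bnd
    have hyjb : |y j| ≤ 1 + ((n : ℤ) - 1) * A := by
      have h2 : |y j| * A ≤ (1 + ((n : ℤ) - 1) * A) * A := by
        rw [add_mul]
        nlinarith [hyjA]
      exact le_of_mul_le_mul_right h2 hApos
    have hn' : (1 : ℤ) ≤ (n : ℤ) := by exact_mod_cast hn
    intro i
    have hAA : A ≤ A ^ 2 := by nlinarith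
    have hnn : (0:ℤ) ≤ (n:ℤ) := by positivity
    have hnAA : (n:ℤ) * A ≤ (n:ℤ) * A ^ 2 := by
      exact mul_le_mul_of_nonneg_left hAA hnn
    by_cases h : i = j
    · subst h
      calc |y i| ≤ 1 + ((n : ℤ) - 1) * A := hyjb
        _ ≤ ((n : ℤ) + 1) * A ^ 2 := by nlinarith
    · calc |y i| ≤ A := hbnd_ne i h
        _ ≤ ((n : ℤ) + 1) * A ^ 2 := by nlinarith
end

section
/- For all integers a and b there exist integers x and y such that a·x + b·y = gcd(a,b), |x| ≤ max(|a|,|b|) and |y| ≤ max(|a|,|b|). -/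
/-!
Reduce a Bézout coefficient `x` of `a` modulo `b / g`, where `g = gcd a b`: this keeps
`a * x + b * y = g` (after adjusting `y` by a multiple of `a / g`) and gives `0 ≤ x < |b| / g`.
Then `|b| * |y| = |g - a * x| ≤ g + |a| * x ≤ |a| * (x + 1) * g ≤ |a| * |b|` when `a ≠ 0`
(as `g ≤ |a|`), and `|y| ≤ 1` when `a = 0`.
-/

namespace Int

theorem exists_bezout_nonneg_add_one_mul_gcd_le (a : ℤ) {b : ℤ} (hb : b ≠ 0) :
    ∃ x y : ℤ, a * x + b * y = gcd a b ∧ 0 ≤ x ∧ (x + 1) * gcd a b ≤ |b| := by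
  set g : ℤ := (gcd a b : ℤ)
  obtain ⟨a', ha'⟩ : g ∣ a := gcd_dvd_left a b
  obtain ⟨m, hm⟩ : g ∣ b := gcd_dvd_right a b
  have hm0 : m ≠ 0 := by rintro rfl; simp [hm] at hb
  have hg0 : 0 ≤ g := natCast_nonneg _
  have hdiv := ediv_mul_add_emod (gcdA a b) m
  refine ⟨gcdA a b % m, gcdB a b + a' * (gcdA a b / m), ?_, emod_nonneg _ hm0, ?_⟩
  · linear_combination (gcd_eq_gcd_ab a b).symm + a * hdiv + (gcdA a b / m) * (a' * hm - m * ha')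
  · calc (gcdA a b % m + 1) * g ≤ |m| * g :=
          mul_le_mul_of_nonneg_right (emod_lt_abs _ hm0) hg0
      _ = |b| := by rw [hm, abs_mul, abs_of_nonneg hg0, mul_comm]

theorem abs_le_max_one_of_bezout {a b x y : ℤ} (hb : b ≠ 0) (hxy : a * x + b * y = gcd a b)
    (hx : 0 ≤ x) (hxb : (x + 1) * gcd a b ≤ |b|) : |y| ≤ max |a| 1 := by
  set g : ℤ := (gcd a b : ℤ)
  have hbpos : 0 < |b| := abs_pos.mpr hb
  have hby : |b| * |y| ≤ g + |a| * x := by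
    rw [← abs_mul, show b * y = g - a * x by linarith]
    calc |g - a * x| ≤ |g| + |a * x| := abs_sub _ _
      _ = g + |a| * x := by rw [abs_mul, abs_of_nonneg hx, abs_of_nonneg (natCast_nonneg _)]
  rcases eq_or_ne a 0 with rfl | ha
  · have hg : g = |b| := by simp [g]
    have : |y| ≤ 1 := le_of_mul_le_mul_left (by simpa [hg] using hby) hbpos
    exact this.trans (le_max_right _ _)
  · have hga : g ≤ |a| := le_of_dvd (abs_pos.mpr ha) ((gcd_dvd_left a b).trans (self_dvd_abs a))
    have hg1 : 1 ≤ g := by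
      change (1 : ℤ) ≤ gcd a b
      exact_mod_cast gcd_pos_of_ne_zero_right a hb
    have : |b| * |y| ≤ |b| * |a| :=
      calc |b| * |y| ≤ g + |a| * x := hby
        _ ≤ |a| * (x + 1) := by linarith
        _ ≤ |a| * ((x + 1) * g) :=
          mul_le_mul_of_nonneg_left (le_mul_of_one_le_right (by linarith) hg1) (abs_nonneg a)
        _ ≤ |a| * |b| := mul_le_mul_of_nonneg_left hxb (abs_nonneg a)
        _ = |b| * |a| := mul_comm _ _
    exact (le_of_mul_le_mul_left this hbpos).trans (le_max_left _ _)

theorem exists_bezout_abs_le_max_of_ne_zero (a : ℤ) {b : ℤ} (hb : b ≠ 0) :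
    ∃ x y : ℤ, a * x + b * y = gcd a b ∧ |x| ≤ max |a| |b| ∧ |y| ≤ max |a| |b| := by
  obtain ⟨x, y, hxy, hx, hxb⟩ := exists_bezout_nonneg_add_one_mul_gcd_le a hb
  have hg1 : (1 : ℤ) ≤ gcd a b := by exact_mod_cast gcd_pos_of_ne_zero_right a hb
  have hb1 : 1 ≤ |b| := one_le_abs hb
  refine ⟨x, y, hxy, ?_, ?_⟩
  · rw [abs_of_nonneg hx]
    exact le_max_of_le_right (by nlinarith)
  · exact (abs_le_max_one_of_bezout hb hxy hx hxb).trans (max_le_max_left _ hb1)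

end Int

/-- **Bounded Bézout (Example 5.2):** for all integers `a, b` there are integers
`x, y` with `a*x + b*y = gcd(a,b)`, `|x| ≤ max |a| |b|` and `|y| ≤ max |a| |b|`. -/
theorem bezout_bounded (a b : ℤ) :
    ∃ x y : ℤ, a * x + b * y = Int.gcd a b ∧
      |x| ≤ max |a| |b| ∧ |y| ≤ max |a| |b| := by
  rcases eq_or_ne b 0 with rfl | hb
  · rcases eq_or_ne a 0 with rfl | ha
    · exact ⟨0, 0, by simp, by simp, by simp⟩
    · obtain ⟨x, y, hxy, hx, hy⟩ := Int.exists_bezout_abs_le_max_of_ne_zero 0 ha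
      refine ⟨y, x, ?_, by rwa [max_comm], by rwa [max_comm]⟩
      rw [Int.gcd_comm]
      linarith
  · exact Int.exists_bezout_abs_le_max_of_ne_zero a hb
end

section
/- Let a₁,…,aₙ be positive integers, let A = max{a₁,…,aₙ}, and let x₁,…,xₙ be integers with x₁a₁ + ⋯ + xₙaₙ = 1. Then there exist nonnegative integers p₁,…,pₙ and n₁,…,nₙ such that pᵢ = 0 whenever xᵢ ≤ 0, nᵢ = 0 whenever xᵢ ≥ 0, p₁ + ⋯ + pₙ = n₁ + ⋯ + nₙ, and moreover −A² ≤ xᵢaᵢ − pᵢA² ≤ A² for every i with xᵢ > 0 and −A² ≤ xᵢaᵢ + nᵢA² ≤ A² for every i with xᵢ < 0. -/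
/-- **Corrected approximations (Lemma 5.3 with equations (8), (9)):** for positive
integers `a i` with maximum `A` and integer coefficients `x i` with
`∑ x i * a i = 1`, there exist nonnegative integers `p i`, `q i` with `p i = 0`
when `x i ≤ 0`, `q i = 0` when `x i ≥ 0`, `∑ p = ∑ q`, and
`-A² ≤ x i * a i - p i * A² ≤ A²` for `x i > 0`,
`-A² ≤ x i * a i + q i * A² ≤ A²` for `x i < 0`. -/
theorem corrected_floor_approximations (n : ℕ) (hn : 1 ≤ n) (a x : Fin n → ℤ)
    (ha : ∀ i, 0 < a i)
    (A : ℤ) (hA : A = Finset.univ.sup' ⟨⟨0, hn⟩, Finset.mem_univ _⟩ a)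
    (hx : ∑ i, x i * a i = 1) :
    ∃ p q : Fin n → ℤ,
      (∀ i, 0 ≤ p i) ∧ (∀ i, 0 ≤ q i) ∧
      (∀ i, x i ≤ 0 → p i = 0) ∧ (∀ i, 0 ≤ x i → q i = 0) ∧
      (∑ i, p i) = (∑ i, q i) ∧
      (∀ i, 0 < x i →
        -A ^ 2 ≤ x i * a i - p i * A ^ 2 ∧ x i * a i - p i * A ^ 2 ≤ A ^ 2) ∧
      (∀ i, x i < 0 →
        -A ^ 2 ≤ x i * a i + q i * A ^ 2 ∧ x i * a i + q i * A ^ 2 ≤ A ^ 2) := by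
  classical
  have hA1 : 1 ≤ A := by
    rw [hA]
    exact le_trans (ha ⟨0, hn⟩) (Finset.le_sup' a (Finset.mem_univ _))
  set B : ℤ := A ^ 2 with hBdef
  have hB : 0 < B := by positivity
  set p0 : Fin n → ℤ := fun i => if 0 < x i then (x i * a i) / B else 0 with hp0
  set q0 : Fin n → ℤ := fun i => if x i < 0 then (-(x i * a i)) / B else 0 with hq0
  set e : Fin n → ℤ := fun i => x i * a i - p0 i * B + q0 i * B with he
  have hp0nn : ∀ i, 0 ≤ p0 i := by
    intro i
    by_cases h : 0 < x i
    · simp only [hp0, if_pos h]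
      exact Int.ediv_nonneg (mul_nonneg h.le (ha i).le) hB.le
    · simp [hp0, if_neg h]
  have hq0nn : ∀ i, 0 ≤ q0 i := by
    intro i
    by_cases h : x i < 0
    · simp only [hq0, if_pos h]
      exact Int.ediv_nonneg (by nlinarith [ha i]) hB.le
    · simp [hq0, if_neg h]
  have hp0zero : ∀ i, x i ≤ 0 → p0 i = 0 := by
    intro i h; simp [hp0, not_lt.2 h]
  have hq0zero : ∀ i, 0 ≤ x i → q0 i = 0 := by
    intro i h; simp [hq0, not_lt.2 h]
  have hepos : ∀ i, 0 < x i → 0 ≤ e i ∧ e i ≤ B - 1 := by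
    intro i h
    have hq : q0 i = 0 := hq0zero i h.le
    have heq : e i = (x i * a i) % B := by
      simp only [he, hp0, if_pos h, hq]
      rw [Int.emod_def]; ring
    constructor
    · rw [heq]; exact Int.emod_nonneg _ hB.ne'
    · rw [heq]
      have := Int.emod_lt_of_pos (x i * a i) hB
      omega
  have heneg : ∀ i, x i < 0 → -(B - 1) ≤ e i ∧ e i ≤ 0 := by
    intro i h
    have hp : p0 i = 0 := hp0zero i h.le
    have heq : e i = -((-(x i * a i)) % B) := by
      simp only [he, hq0, if_pos h, hp]
      rw [Int.emod_def]; ring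
    have h1 := Int.emod_nonneg (-(x i * a i)) hB.ne'
    have h2 := Int.emod_lt_of_pos (-(x i * a i)) hB
    omega
  have hezero : ∀ i, x i = 0 → e i = 0 := by
    intro i h
    simp [he, hp0zero i h.le, hq0zero i h.ge, h]
  set D : ℤ := ∑ i, p0 i - ∑ i, q0 i with hD
  have hsum : ∑ i, e i = 1 - D * B := by
    simp only [he]
    rw [Finset.sum_add_distrib, Finset.sum_sub_distrib, ← Finset.sum_mul, ← Finset.sum_mul, hx,
      hD]
    ring
  set P : Finset (Fin n) := Finset.univ.filter fun i => 0 < x i with hP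
  set N : Finset (Fin n) := Finset.univ.filter fun i => x i < 0 with hN
  have hub : ∑ i, e i ≤ (P.card : ℤ) * (B - 1) := by
    calc ∑ i, e i ≤ ∑ i, (if 0 < x i then B - 1 else 0) := by
          refine Finset.sum_le_sum fun i _ => ?_
          by_cases h : 0 < x i
          · rw [if_pos h]; exact (hepos i h).2
          · rw [if_neg h]
            rcases lt_or_eq_of_le (not_lt.1 h) with h' | h'
            · exact (heneg i h').2
            · exact le_of_eq (hezero i (by omega))
      _ = (P.card : ℤ) * (B - 1) := by
          rw [← Finset.sum_filter, Finset.sum_const, nsmul_eq_mul]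
  have hlb : -((N.card : ℤ) * (B - 1)) ≤ ∑ i, e i := by
    calc -((N.card : ℤ) * (B - 1)) = ∑ i, (if x i < 0 then -(B - 1) else 0) := by
          rw [← Finset.sum_filter, Finset.sum_const, nsmul_eq_mul]; ring
      _ ≤ ∑ i, e i := by
          refine Finset.sum_le_sum fun i _ => ?_
          by_cases h : x i < 0
          · rw [if_pos h]; exact (heneg i h).1
          · rw [if_neg h]
            rcases lt_or_eq_of_le (not_lt.1 h) with h' | h'
            · exact (hepos i h').1
            · exact ge_of_eq (hezero i (by omega))
  have hsum_ind : ∀ (T : Finset (Fin n)),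
      ∑ i, (if i ∈ T then (1 : ℤ) else 0) = (T.card : ℤ) := by
    intro T
    rw [← Finset.sum_filter, Finset.filter_mem_eq_inter, Finset.univ_inter,
      Finset.sum_const, nsmul_eq_mul, mul_one]
  rcases le_or_gt D 0 with hD0 | hDpos
  · -- D ≤ 0 : add -D many ones to p on positive coordinates
    have hcard : -D ≤ (P.card : ℤ) := by
      have h1 : 1 - D * B ≤ (P.card : ℤ) * (B - 1) := hsum ▸ hub
      nlinarith
    have hcard' : (-D).toNat ≤ P.card := by
      omega
    obtain ⟨T, hTsub, hTcard⟩ := Finset.exists_subset_card_eq hcard'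
    refine ⟨fun i => p0 i + if i ∈ T then 1 else 0, q0, ?_, hq0nn, ?_, hq0zero, ?_, ?_, ?_⟩
    · intro i; have := hp0nn i; positivity
    · intro i hi
      have hiT : i ∉ T := fun hiT => by
        have := Finset.mem_filter.1 (hTsub hiT)
        omega
      simp [hp0zero i hi, hiT]
    · rw [Finset.sum_add_distrib, hsum_ind T, hTcard]
      omega
    · intro i hi
      have hq : q0 i = 0 := hq0zero i hi.le
      have hei : e i = x i * a i - p0 i * B := by simp [he, hq]
      have h1 := (hepos i hi).1
      have h2 := (hepos i hi).2
      by_cases hiT : i ∈ T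
      · simp only [if_pos hiT]
        constructor <;> linarith [hei, h1, h2, hB, hA1]
      · simp only [if_neg hiT]
        constructor <;> linarith [hei, h1, h2, hB, hA1]
    · intro i hi
      have hp : p0 i = 0 := hp0zero i hi.le
      have hei : e i = x i * a i + q0 i * B := by simp [he, hp]
      have h1 := (heneg i hi).1
      have h2 := (heneg i hi).2
      constructor <;> linarith [hei, h1, h2, hB, hA1]
  · rcases le_or_gt D (N.card : ℤ) with hDN | hDN
    · -- 1 ≤ D ≤ N.card : add D many ones to q on negative coordinates
      have hcard' : D.toNat ≤ N.card := by omega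
      obtain ⟨T, hTsub, hTcard⟩ := Finset.exists_subset_card_eq hcard'
      refine ⟨p0, fun i => q0 i + if i ∈ T then 1 else 0, hp0nn, ?_, hp0zero, ?_, ?_, ?_, ?_⟩
      · intro i; have := hq0nn i; positivity
      · intro i hi
        have hiT : i ∉ T := fun hiT => by
          have := Finset.mem_filter.1 (hTsub hiT)
          omega
        simp [hq0zero i hi, hiT]
      · rw [Finset.sum_add_distrib, hsum_ind T, hTcard]
        omega
      · intro i hi
        have hq : q0 i = 0 := hq0zero i hi.le
        have hei : e i = x i * a i - p0 i * B := by simp [he, hq]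
        have h1 := (hepos i hi).1
        have h2 := (hepos i hi).2
        constructor <;> linarith [hei, h1, h2, hB, hA1]
      · intro i hi
        have hp : p0 i = 0 := hp0zero i hi.le
        have hei : e i = x i * a i + q0 i * B := by simp [he, hp]
        have h1 := (heneg i hi).1
        have h2 := (heneg i hi).2
        by_cases hiT : i ∈ T
        · simp only [if_pos hiT]
          constructor <;> linarith [hei, h1, h2, hB, hA1]
        · simp only [if_neg hiT]
          constructor <;> linarith [hei, h1, h2, hB, hA1]
    · -- N.card < D : then B = 1, D = 1, N = ∅; subtract one from some positive p0
      have hNle : (N.card : ℤ) ≤ D - 1 := by omega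
      have h1 : -((N.card : ℤ) * (B - 1)) ≤ 1 - D * B := hsum ▸ hlb
      have hB1 : B = 1 ∧ D = 1 := by
        constructor <;> nlinarith
      have hN0 : N.card = 0 := by omega
      have hNempty : ∀ i, ¬ x i < 0 := by
        intro i hi
        have : i ∈ N := Finset.mem_filter.2 ⟨Finset.mem_univ _, hi⟩
        rw [Finset.card_eq_zero.1 hN0] at this
        exact absurd this (Finset.notMem_empty _)
      have hq0all : ∀ i, q0 i = 0 := fun i => hq0zero i (not_lt.1 (hNempty i))
      have hsq0 : ∑ i, q0 i = 0 := Finset.sum_eq_zero fun i _ => hq0all i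
      have hsp0 : ∑ i, p0 i = 1 := by omega
      have hj : ∃ j, p0 j ≠ 0 := by
        by_contra h
        push_neg at h
        rw [Finset.sum_eq_zero fun i _ => h i] at hsp0
        exact one_ne_zero hsp0.symm
      obtain ⟨j, hj⟩ := hj
      have hjpos : 0 < p0 j := lt_of_le_of_ne (hp0nn j) (Ne.symm hj)
      have hxj : 0 < x j := by
        by_contra h
        exact hj (hp0zero j (not_lt.1 h))
      refine ⟨fun i => p0 i - if i = j then 1 else 0, q0, ?_, hq0nn, ?_, hq0zero, ?_, ?_, ?_⟩
      · intro i
        by_cases h : i = j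
        · simp only [h, if_pos rfl]; omega
        · simp only [if_neg h]; exact (hp0nn i).trans (by omega)
      · intro i hi
        have : i ≠ j := fun h => absurd (h ▸ hi) (not_le.2 hxj)
        simp [hp0zero i hi, this]
      · rw [Finset.sum_sub_distrib, Finset.sum_ite_eq' Finset.univ j fun _ => (1 : ℤ),
          if_pos (Finset.mem_univ j)]
        omega
      · intro i hi
        have hq : q0 i = 0 := hq0zero i hi.le
        have hei : e i = x i * a i - p0 i * B := by simp [he, hq]
        have h1 := (hepos i hi).1
        have h2 := (hepos i hi).2
        by_cases hij : i = j
        · simp only [if_pos hij]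
          constructor <;> linarith [hei, h1, h2, hB1.1]
        · simp only [if_neg hij]
          constructor <;> linarith [hei, h1, h2, hB]
      · intro i hi
        exact absurd hi (hNempty i)
end

section
/- Let c ≥ 1 and let G be a group of nilpotency class at most c (Γ_{c+1} = 1 for the lower central series Γ₁ = G, Γ_{i+1} = [Γᵢ, G]). Let A ⊆ G be a subset generating G, and let R ⊆ G. Then the normal closure of R in G equals the subgroup of G generated by the set of all iterated commutators [⋯[[r, x₁], x₂], ⋯, x_j] with r ∈ R, 0 ≤ j ≤ c, and x₁,…,x_j ∈ A ∪ A⁻¹, where [x,y] = x⁻¹y⁻¹xy (the case j = 0 giving the elements of R themselves). -/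
/-!
If `A` generates `G`, a subgroup `H = ⟨S⟩` is normal as soon as `a s a⁻¹ ∈ H` for all
`s ∈ S` and `a ∈ A ∪ A⁻¹`. For `S` the set of iterated commutators of length `≤ c`, conjugating
`w = [r, x₁, …, x_j]` by `a` gives `w · [w, a⁻¹]`, and `[w, a⁻¹]` is again in `S` when `j < c`,
while for `j = c` the element `w` lies in `Γ_{c+1} = 1`. So `⟨S⟩` is a normal subgroup
containing `R`, and it is contained in the normal closure of `R` because each commutator
`[w, x] = w⁻¹ · x⁻¹ w x` lies in every normal subgroup containing `w`.
-/

/-- The commutator with the paper's convention `[x,y] = x⁻¹ y⁻¹ x y`. -/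
def pcomm {G : Type*} [Group G] (x y : G) : G := x⁻¹ * y⁻¹ * x * y

open scoped commutatorElement

section

variable {G : Type*} [Group G]

lemma pcomm_eq_commutatorElement_inv (x y : G) : pcomm x y = ⁅x⁻¹, y⁻¹⁆ := by
  simp [pcomm, commutatorElement_def]

lemma mul_pcomm_inv (w g : G) : w * pcomm w g⁻¹ = g * w * g⁻¹ := by
  simp only [pcomm, inv_inv]
  group

lemma List.foldl_pcomm_mem_lowerCentralSeries (l : List G) {r : G} {k : ℕ}
    (hr : r ∈ (⊤ : Subgroup G).lowerCentralSeries k) :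
    l.foldl pcomm r ∈ (⊤ : Subgroup G).lowerCentralSeries (k + l.length) := by
  induction l generalizing r k with
  | nil => simpa using hr
  | cons x l ih =>
    have hrx : pcomm r x ∈ (⊤ : Subgroup G).lowerCentralSeries (k + 1) := by
      rw [pcomm_eq_commutatorElement_inv, Subgroup.lowerCentralSeries_succ]
      exact Subgroup.commutator_mem_commutator (inv_mem hr) (Subgroup.mem_top _)
    simpa only [List.foldl_cons, List.length_cons, Nat.add_comm l.length, ← Nat.add_assoc]
      using ih hrx

lemma List.foldl_pcomm_mem_of_normal {N : Subgroup G} [N.Normal] (l : List G) {r : G}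
    (hr : r ∈ N) : l.foldl pcomm r ∈ N := by
  induction l generalizing r with
  | nil => exact hr
  | cons x l ih =>
    refine ih ?_
    have hconj : pcomm r x = r⁻¹ * (x⁻¹ * r * x⁻¹⁻¹) := by simp only [pcomm, inv_inv]; group
    rw [hconj]
    exact mul_mem (inv_mem hr) (‹N.Normal›.conj_mem r hr x⁻¹)

namespace Subgroup

lemma conj_mem_closure_of_forall_conj_mem {S : Set G} {g n : G}
    (hS : ∀ s ∈ S, g * s * g⁻¹ ∈ closure S) (hn : n ∈ closure S) :
    g * n * g⁻¹ ∈ closure S := by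
  have hmap : (closure S).map (MulAut.conj g).toMonoidHom ≤ closure S := by
    rw [MonoidHom.map_closure, closure_le]
    rintro _ ⟨s, hs, rfl⟩
    exact hS s hs
  exact hmap ⟨n, hn, rfl⟩

lemma closure_normal_of_conj_mem {A S : Set G} (hA : closure A = ⊤)
    (hS : ∀ a, a ∈ A ∨ a⁻¹ ∈ A → ∀ s ∈ S, a * s * a⁻¹ ∈ closure S) :
    (closure S).Normal := by
  have hconj : ∀ a, a ∈ A ∨ a⁻¹ ∈ A → ∀ y : G,
      (∀ n ∈ closure S, y * n * y⁻¹ ∈ closure S) →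
      ∀ n ∈ closure S, a * y * n * (a * y)⁻¹ ∈ closure S := by
    intro a ha y hy n hn
    have hyn := conj_mem_closure_of_forall_conj_mem (hS a ha) (hy n hn)
    simpa only [mul_inv_rev, mul_assoc] using hyn
  refine ⟨fun n hn g => ?_⟩
  induction (hA ▸ mem_top g : g ∈ closure A) using closure_induction_left generalizing n with
  | one => simpa using hn
  | mul_left a ha y _ ih => exact hconj a (.inl ha) y ih n hn
  | inv_mul_cancel a ha y _ ih => exact hconj a⁻¹ (.inr (by rwa [inv_inv])) y ih n hn

end Subgroup

def iteratedPcomms (c : ℕ) (A R : Set G) : Set G :=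
  {w : G | ∃ r ∈ R, ∃ l : List G,
    l.length ≤ c ∧ (∀ x ∈ l, x ∈ A ∨ x⁻¹ ∈ A) ∧ w = l.foldl pcomm r}

lemma subset_iteratedPcomms (c : ℕ) (A R : Set G) : R ⊆ iteratedPcomms c A R :=
  fun r hr => ⟨r, hr, [], Nat.zero_le c, by simp, rfl⟩

lemma conj_mem_closure_iteratedPcomms {c : ℕ}
    (hG : (⊤ : Subgroup G).lowerCentralSeries c = ⊥) {A R : Set G} {g w : G}
    (hg : g ∈ A ∨ g⁻¹ ∈ A) (hw : w ∈ iteratedPcomms c A R) :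
    g * w * g⁻¹ ∈ Subgroup.closure (iteratedPcomms c A R) := by
  obtain ⟨r, hr, l, hlen, hl, rfl⟩ := hw
  rcases hlen.lt_or_eq with hlt | rfl
  · have hext : pcomm (l.foldl pcomm r) g⁻¹ ∈ iteratedPcomms c A R := by
      refine ⟨r, hr, l ++ [g⁻¹], by simpa using hlt, ?_, by simp⟩
      simp only [List.mem_append, List.mem_singleton]
      rintro x (hx | rfl)
      · exact hl x hx
      · rwa [inv_inv, or_comm]
    rw [← mul_pcomm_inv]
    exact mul_mem (Subgroup.subset_closure ⟨r, hr, l, hlt.le, hl, rfl⟩)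
      (Subgroup.subset_closure hext)
  · have htriv := l.foldl_pcomm_mem_lowerCentralSeries
      (by simp : r ∈ (⊤ : Subgroup G).lowerCentralSeries 0)
    rw [Nat.zero_add, hG, Subgroup.mem_bot] at htriv
    simp [htriv]

end

theorem normalClosure_eq_closure_iterated_commutators_general (G : Type*) [Group G]
    (c : ℕ) (hG : (⊤ : Subgroup G).lowerCentralSeries c = ⊥)
    (A R : Set G) (hA : Subgroup.closure A = ⊤) :
    Subgroup.normalClosure R =
      Subgroup.closure {w : G | ∃ r ∈ R, ∃ l : List G,
        l.length ≤ c ∧ (∀ x ∈ l, x ∈ A ∨ x⁻¹ ∈ A) ∧ w = l.foldl pcomm r} := by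
  change _ = Subgroup.closure (iteratedPcomms c A R)
  have : (Subgroup.closure (iteratedPcomms c A R)).Normal :=
    Subgroup.closure_normal_of_conj_mem hA fun _ ha _ hw =>
      conj_mem_closure_iteratedPcomms hG ha hw
  apply le_antisymm
  · exact Subgroup.normalClosure_le_normal
      ((subset_iteratedPcomms c A R).trans Subgroup.subset_closure)
  · rw [Subgroup.closure_le]
    rintro w ⟨r, hr, l, -, -, rfl⟩
    exact l.foldl_pcomm_mem_of_normal (Subgroup.subset_normalClosure hr)

/-- **Generating the normal closure (inside Proposition 8.1):** in a group of
nilpotency class at most `c` generated by `A`, the normal closure of a set `R`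
is generated by the iterated commutators `[⋯[[r,x₁],x₂],⋯,x_j]` with `r ∈ R`,
`0 ≤ j ≤ c` and `x₁, …, x_j ∈ A ∪ A⁻¹`. -/
theorem normalClosure_eq_closure_iterated_commutators (G : Type*) [Group G]
    (c : ℕ) (hc : 1 ≤ c) (hG : (⊤ : Subgroup G).lowerCentralSeries c = ⊥)
    (A R : Set G) (hA : Subgroup.closure A = ⊤) :
    Subgroup.normalClosure R =
      Subgroup.closure {w : G | ∃ r ∈ R, ∃ l : List G,
        l.length ≤ c ∧ (∀ x ∈ l, x ∈ A ∨ x⁻¹ ∈ A) ∧ w = l.foldl pcomm r} :=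
  normalClosure_eq_closure_iterated_commutators_general G c hG A R hA
end
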